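/- Let Q be a query on a λ-graph G. If there exists a sharing equivalence containing Q, then the spreading Q⇓ is the smallest sharing equivalence containing Q. -/
import Mathlib


/-- Directions for paths in a λ-graph. -/
inductive Dir : Type where
  | left | body | right
deriving DecidableEq

/-- Labels of nodes of a (pre–)λ-graph. -/
inductive NodeLabel (Node Name : Type) : Type where
  | app (l r : Node)
  | abs (body : Node)
  | fvar (name : Name)
  | bvar (binder : Node)

/-- The four kinds of nodes. -/
inductive NodeKind : Type where
  | app | abs | fvar | bvar
deriving DecidableEq

/-- The kind of a node label. -/
def NodeLabel.kind {Node Name : Type} : NodeLabel Node Name → NodeKind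
  | .app _ _ => .app
  | .abs _ => .abs
  | .fvar _ => .fvar
  | .bvar _ => .bvar

/-- Locally nameless λ-terms. -/
inductive Term (Name : Type) : Type where
  | bvar (i : ℕ)
  | fvar (a : Name)
  | app (t s : Term Name)
  | lam (t : Term Name)

/-- Reflexive–symmetric–transitive closure `R*` of a relation. -/
inductive RstClosure {α : Type _} (R : α → α → Prop) : α → α → Prop where
  | base {a b : α} : R a b → RstClosure R a b
  | refl (a : α) : RstClosure R a a
  | symm {a b : α} : RstClosure R a b → RstClosure R b a
  | trans {a b c : α} : RstClosure R a b → RstClosure R b c → RstClosure R a c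

/-- A pre–λ-graph: every node carries a label; the binder of a bound variable node is an
abstraction node; the name of a free variable node uniquely identifies it. -/
structure PreLamGraph (Node Name : Type) : Type where
  label : Node → NodeLabel Node Name
  binder_abs : ∀ n l, label n = .bvar l → ∃ b, label l = .abs b
  fvar_inj : ∀ n m a, label n = .fvar a → label m = .fvar a → n = m

namespace PreLamGraph

variable {Node Name : Type}

/-- `Path G τ n m`: there is a path from `n` to `m` with trace `τ`
(binding edges are never followed). -/
inductive Path (G : PreLamGraph Node Name) : List Dir → Node → Node → Prop where
  | nil (n : Node) : Path G [] n n
  | abs {τ : List Dir} {n m b : Node} :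
      Path G τ n m → G.label m = .abs b → Path G (.body :: τ) n b
  | appL {τ : List Dir} {n m l r : Node} :
      Path G τ n m → G.label m = .app l r → Path G (.left :: τ) n l
  | appR {τ : List Dir} {n m l r : Node} :
      Path G τ n m → G.label m = .app l r → Path G (.right :: τ) n r

/-- `r` is a root: the only path ending at `r` is the empty path from `r` itself. -/
def Root (G : PreLamGraph Node Name) (r : Node) : Prop :=
  ∀ (τ : List Dir) (n : Node), G.Path τ n r → τ = []

/-- `Crosses G τ n p`: the path from `n` with trace `τ` crosses the node `p`. -/
inductive Crosses (G : PreLamGraph Node Name) : List Dir → Node → Node → Prop where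
  | here {τ : List Dir} {n p : Node} : G.Path τ n p → Crosses G τ n p
  | step {d : Dir} {τ : List Dir} {n p m : Node} :
      Crosses G τ n p → G.Path (d :: τ) n m → Crosses G (d :: τ) n p

/-- `m` dominates `n`: every path from a root to `n` crosses `m`. -/
def Dominates (G : PreLamGraph Node Name) (m n : Node) : Prop :=
  ∀ (r : Node) (τ : List Dir), G.Root r → G.Path τ r n → G.Crosses τ r m

/-- Acyclicity: a path from a node to itself must have empty trace. -/
def Acyclic (G : PreLamGraph Node Name) : Prop :=
  ∀ (n : Node) (τ : List Dir), G.Path τ n n → τ = []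

/-- Every bound variable node is dominated by its binder. -/
def Dominated (G : PreLamGraph Node Name) : Prop :=
  ∀ (n l : Node), G.label n = .bvar l → G.Dominates l n

/-- A query relates only root nodes. -/
def IsQuery (G : PreLamGraph Node Name) (Q : Node → Node → Prop) : Prop :=
  ∀ n m, Q n m → G.Root n ∧ G.Root m

/-- A relation is homogeneous if it only relates nodes of the same kind. -/
def Homogeneous (G : PreLamGraph Node Name) (R : Node → Node → Prop) : Prop :=
  ∀ n m, R n m → (G.label n).kind = (G.label m).kind

/-- Closure under the left propagation rule. -/
def ClosedAppL (G : PreLamGraph Node Name) (R : Node → Node → Prop) : Prop :=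
  ∀ n m n1 n2 m1 m2, G.label n = .app n1 n2 → G.label m = .app m1 m2 → R n m → R n1 m1

/-- Closure under the right propagation rule. -/
def ClosedAppR (G : PreLamGraph Node Name) (R : Node → Node → Prop) : Prop :=
  ∀ n m n1 n2 m1 m2, G.label n = .app n1 n2 → G.label m = .app m1 m2 → R n m → R n2 m2

/-- Closure under the body propagation rule. -/
def ClosedAbs (G : PreLamGraph Node Name) (R : Node → Node → Prop) : Prop :=
  ∀ n m n' m', G.label n = .abs n' → G.label m = .abs m' → R n m → R n' m'

/-- Closure under the scoping rule. -/
def ClosedScope (G : PreLamGraph Node Name) (R : Node → Node → Prop) : Prop :=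
  ∀ n m l l', G.label n = .bvar l → G.label m = .bvar l' → R n m → R l l'

/-- Closure under the three propagation rules. -/
def ClosedProp (G : PreLamGraph Node Name) (R : Node → Node → Prop) : Prop :=
  G.ClosedAppL R ∧ G.ClosedAppR R ∧ G.ClosedAbs R

/-- A blind bisimulation is a homogeneous relation closed under the propagation rules. -/
def BlindBisimulation (G : PreLamGraph Node Name) (R : Node → Node → Prop) : Prop :=
  G.Homogeneous R ∧ G.ClosedProp R

/-- A bisimulation is a homogeneous relation closed under the propagation rules
and the scoping rule. -/
def Bisimulation (G : PreLamGraph Node Name) (R : Node → Node → Prop) : Prop :=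
  G.BlindBisimulation R ∧ G.ClosedScope R

/-- A relation is open if whenever it relates two free variable nodes they are equal. -/
def OpenRel (G : PreLamGraph Node Name) (R : Node → Node → Prop) : Prop :=
  ∀ n m a b, G.label n = .fvar a → G.label m = .fvar b → R n m → n = m

/-- A sharing equivalence is an open bisimulation that is also an equivalence relation. -/
def SharingEquivalence (G : PreLamGraph Node Name) (R : Node → Node → Prop) : Prop :=
  G.OpenRel R ∧ G.Bisimulation R ∧ Equivalence R

/-- A blind sharing equivalence is an equivalence relation that is a blind bisimulation. -/
def BlindSharingEquivalence (G : PreLamGraph Node Name) (R : Node → Node → Prop) : Prop :=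
  Equivalence R ∧ G.BlindBisimulation R

/-- The propagation `R↓`: the smallest relation containing `R` and closed under the
propagation rules. -/
inductive Propagation (G : PreLamGraph Node Name) (R : Node → Node → Prop) :
    Node → Node → Prop where
  | base {n m : Node} : R n m → Propagation G R n m
  | appL {n m n1 n2 m1 m2 : Node} :
      Propagation G R n m → G.label n = .app n1 n2 → G.label m = .app m1 m2 →
      Propagation G R n1 m1
  | appR {n m n1 n2 m1 m2 : Node} :
      Propagation G R n m → G.label n = .app n1 n2 → G.label m = .app m1 m2 →
      Propagation G R n2 m2
  | abs {n m n' m' : Node} :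
      Propagation G R n m → G.label n = .abs n' → G.label m = .abs m' →
      Propagation G R n' m'

/-- The spreading `R⇓`: the smallest equivalence relation containing `R` and closed
under the propagation rules. -/
inductive Spreading (G : PreLamGraph Node Name) (R : Node → Node → Prop) :
    Node → Node → Prop where
  | base {n m : Node} : R n m → Spreading G R n m
  | refl (n : Node) : Spreading G R n n
  | symm {n m : Node} : Spreading G R n m → Spreading G R m n
  | trans {n m p : Node} : Spreading G R n m → Spreading G R m p → Spreading G R n p
  | appL {n m n1 n2 m1 m2 : Node} :
      Spreading G R n m → G.label n = .app n1 n2 → G.label m = .app m1 m2 →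
      Spreading G R n1 m1
  | appR {n m n1 n2 m1 m2 : Node} :
      Spreading G R n m → G.label n = .app n1 n2 → G.label m = .app m1 m2 →
      Spreading G R n2 m2
  | abs {n m n' m' : Node} :
      Spreading G R n m → G.label n = .abs n' → G.label m = .abs m' →
      Spreading G R n' m'

/-- `IndexOf G l n τ k`: the de Bruijn index of the abstraction node `l` along the path
from `n` with trace `τ` (which crosses `l`) is `k`. -/
inductive IndexOf (G : PreLamGraph Node Name) (l n : Node) : List Dir → ℕ → Prop where
  | here {τ : List Dir} : G.Path τ n l → IndexOf G l n τ 0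
  | abs {d : Dir} {τ : List Dir} {m b : Node} {k : ℕ} :
      G.Path (d :: τ) n m → G.label m = .abs b → m ≠ l →
      IndexOf G l n τ k → IndexOf G l n (d :: τ) (k + 1)
  | other {d : Dir} {τ : List Dir} {m : Node} {k : ℕ} :
      G.Path (d :: τ) n m → (∀ b, G.label m ≠ .abs b) →
      IndexOf G l n τ k → IndexOf G l n (d :: τ) k

/-- `Readback G r τ t`: the readback of the endpoint of the access path from `r` with
trace `τ` is the locally nameless term `t`. -/
inductive Readback (G : PreLamGraph Node Name) (r : Node) : List Dir → Term Name → Prop where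
  | bvar {τ : List Dir} {n l : Node} {k : ℕ} :
      G.Path τ r n → G.label n = .bvar l → G.IndexOf l r τ k →
      Readback G r τ (.bvar k)
  | fvar {τ : List Dir} {n : Node} {a : Name} :
      G.Path τ r n → G.label n = .fvar a → Readback G r τ (.fvar a)
  | abs {τ : List Dir} {n b : Node} {t : Term Name} :
      G.Path τ r n → G.label n = .abs b → Readback G r (.body :: τ) t →
      Readback G r τ (.lam t)
  | app {τ : List Dir} {n n1 n2 : Node} {t1 t2 : Term Name} :
      G.Path τ r n → G.label n = .app n1 n2 →
      Readback G r (.left :: τ) t1 → Readback G r (.right :: τ) t2 →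
      Readback G r τ (.app t1 t2)

end PreLamGraph

/-- A λ-graph: a finite, acyclic and dominated pre–λ-graph. -/
structure LamGraph (Node Name : Type) extends PreLamGraph Node Name where
  finite : Finite Node
  acyclic : toPreLamGraph.Acyclic
  dominated : toPreLamGraph.Dominated

section SharingAux
open PreLamGraph

variable {Node Name : Type}

private theorem suffix_cons'' {α : Type*} {σ τ : List α} {d : α} (h : σ <:+ (d :: τ)) :
    σ = d :: τ ∨ σ <:+ τ := by
  obtain ⟨t, ht⟩ := h
  cases t with
  | nil => exact Or.inl ht
  | cons e t' => exact Or.inr ⟨t', by injection ht⟩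

private theorem suffix_total' {α : Type*} : ∀ (t t' σ σ' : List α), t ++ σ = t' ++ σ' →
    σ <:+ σ' ∨ σ' <:+ σ := by
  intro t
  induction t with
  | nil => intro t' σ σ' h; exact Or.inr ⟨t', h.symm⟩
  | cons a t ih =>
    intro t' σ σ' h
    cases t' with
    | nil => exact Or.inl ⟨a :: t, h⟩
    | cons b t'' =>
      injection h with _ h2
      exact ih t'' σ σ' h2

private theorem kind_app' {G : PreLamGraph Node Name} {m : Node}
    (hk : (G.label m).kind = NodeKind.app) : ∃ a b, G.label m = .app a b := by
  cases hE : G.label m <;> rw [hE] at hk <;> simp [NodeLabel.kind] at hk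
  exact ⟨_, _, rfl⟩

private theorem kind_abs' {G : PreLamGraph Node Name} {m : Node}
    (hk : (G.label m).kind = NodeKind.abs) : ∃ b, G.label m = .abs b := by
  cases hE : G.label m <;> rw [hE] at hk <;> simp [NodeLabel.kind] at hk
  exact ⟨_, rfl⟩

private theorem kind_bvar' {G : PreLamGraph Node Name} {m : Node}
    (hk : (G.label m).kind = NodeKind.bvar) : ∃ b, G.label m = .bvar b := by
  cases hE : G.label m <;> rw [hE] at hk <;> simp [NodeLabel.kind] at hk
  exact ⟨_, rfl⟩

private theorem path_det' {G : PreLamGraph Node Name} {σ : List Dir} {r p q : Node}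
    (h1 : G.Path σ r p) (h2 : G.Path σ r q) : p = q := by
  induction h1 generalizing q with
  | nil => cases h2; rfl
  | abs hp hl ih =>
    cases h2 with
    | abs hp' hl' =>
      cases ih hp'
      rw [hl] at hl'
      cases hl'
      rfl
  | appL hp hl ih =>
    cases h2 with
    | appL hp' hl' =>
      cases ih hp'
      rw [hl] at hl'
      cases hl'
      rfl
  | appR hp hl ih =>
    cases h2 with
    | appR hp' hl' =>
      cases ih hp'
      rw [hl] at hl'
      cases hl'
      rfl

private theorem path_comp_aux {G : PreLamGraph Node Name} :
    ∀ {τ2 : List Dir} {b c : Node}, G.Path τ2 b c →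
    ∀ {τ1 : List Dir} {a : Node}, G.Path τ1 a b → G.Path (τ2 ++ τ1) a c := by
  intro τ2 b c h2
  induction h2 with
  | nil => intro τ1 a h1; exact h1
  | abs _ hl ih => intro τ1 a h1; exact Path.abs (ih h1) hl
  | appL _ hl ih => intro τ1 a h1; exact Path.appL (ih h1) hl
  | appR _ hl ih => intro τ1 a h1; exact Path.appR (ih h1) hl

private theorem path_comp' {G : PreLamGraph Node Name} {τ1 τ2 : List Dir} {a b c : Node}
    (h1 : G.Path τ1 a b) (h2 : G.Path τ2 b c) : G.Path (τ2 ++ τ1) a c :=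
  path_comp_aux h2 h1

private theorem path_split' {G : PreLamGraph Node Name} : ∀ (ρ : List Dir) {σ : List Dir}
    {r x y : Node}, G.Path (ρ ++ σ) r x → G.Path σ r y → G.Path ρ y x := by
  intro ρ
  induction ρ with
  | nil =>
    intro σ r x y h1 h2
    obtain rfl := path_det' h1 h2
    exact Path.nil _
  | cons d ρ ih =>
    intro σ r x y h1 h2
    cases h1 with
    | abs hp hl => exact Path.abs (ih hp h2) hl
    | appL hp hl => exact Path.appL (ih hp h2) hl
    | appR hp hl => exact Path.appR (ih hp h2) hl

private theorem path_prefix' {G : PreLamGraph Node Name} {τ : List Dir} {r n : Node}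
    (h : G.Path τ r n) : ∀ {σ : List Dir}, σ <:+ τ → ∃ p, G.Path σ r p := by
  induction h with
  | nil =>
    intro σ hσ
    obtain rfl := List.suffix_nil.mp hσ
    exact ⟨_, Path.nil _⟩
  | abs hp hl ih =>
    intro σ hσ
    rcases suffix_cons'' hσ with rfl | h'
    · exact ⟨_, Path.abs hp hl⟩
    · exact ih h'
  | appL hp hl ih =>
    intro σ hσ
    rcases suffix_cons'' hσ with rfl | h'
    · exact ⟨_, Path.appL hp hl⟩
    · exact ih h'
  | appR hp hl ih =>
    intro σ hσ
    rcases suffix_cons'' hσ with rfl | h'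
    · exact ⟨_, Path.appR hp hl⟩
    · exact ih h'

private theorem crosses_suffix' {G : PreLamGraph Node Name} {τ : List Dir} {r p : Node}
    (h : G.Crosses τ r p) : ∃ σ, σ <:+ τ ∧ G.Path σ r p := by
  induction h with
  | here hp => exact ⟨_, List.suffix_rfl, hp⟩
  | step _ _ ih =>
    obtain ⟨σ, hs, hp⟩ := ih
    exact ⟨σ, hs.trans (List.suffix_cons _ _), hp⟩

private theorem parallel_aux {G : PreLamGraph Node Name} {Q : Node → Node → Prop} :
    ∀ {σ : List Dir} {r p : Node}, G.Path σ r p → ∀ {r' p' : Node},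
    G.Path σ r' p' → Spreading G Q r r' → Spreading G Q p p' := by
  intro σ r p h1
  induction h1 with
  | nil => intro r' p' h2 hrr; cases h2; exact hrr
  | abs hp hl ih =>
    intro r' p' h2 hrr
    cases h2 with
    | abs hp' hl' => exact Spreading.abs (ih hp' hrr) hl hl'
  | appL hp hl ih =>
    intro r' p' h2 hrr
    cases h2 with
    | appL hp' hl' => exact Spreading.appL (ih hp' hrr) hl hl'
  | appR hp hl ih =>
    intro r' p' h2 hrr
    cases h2 with
    | appR hp' hl' => exact Spreading.appR (ih hp' hrr) hl hl'

private theorem parallel' {G : PreLamGraph Node Name} {Q : Node → Node → Prop} {r r' : Node}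
    (hrr : Spreading G Q r r') {σ : List Dir} {p p' : Node}
    (h1 : G.Path σ r p) (h2 : G.Path σ r' p') : Spreading G Q p p' :=
  parallel_aux h1 h2 hrr

private theorem transfer' {G : PreLamGraph Node Name} {E : Node → Node → Prop}
    (hHom : G.Homogeneous E) (hProp : G.ClosedProp E) :
    ∀ {ρ : List Dir} {a c : Node}, G.Path ρ a c → ∀ {b : Node}, E a b →
      ∃ d, G.Path ρ b d ∧ E c d := by
  intro ρ a c h
  induction h with
  | nil => intro b hab; exact ⟨b, Path.nil b, hab⟩
  | abs hp hl ih =>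
    intro b hab
    obtain ⟨d0, pd0, hmd0⟩ := ih hab
    have hk := hHom _ _ hmd0
    rw [hl] at hk
    obtain ⟨b0, hb0⟩ := kind_abs' hk.symm
    exact ⟨b0, Path.abs pd0 hb0, hProp.2.2 _ _ _ _ hl hb0 hmd0⟩
  | appL hp hl ih =>
    intro b hab
    obtain ⟨d0, pd0, hmd0⟩ := ih hab
    have hk := hHom _ _ hmd0
    rw [hl] at hk
    obtain ⟨b1, b2, hb0⟩ := kind_app' hk.symm
    exact ⟨b1, Path.appL pd0 hb0, hProp.1 _ _ _ _ _ _ hl hb0 hmd0⟩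
  | appR hp hl ih =>
    intro b hab
    obtain ⟨d0, pd0, hmd0⟩ := ih hab
    have hk := hHom _ _ hmd0
    rw [hl] at hk
    obtain ⟨b1, b2, hb0⟩ := kind_app' hk.symm
    exact ⟨b2, Path.appR pd0 hb0, hProp.2.1 _ _ _ _ _ _ hl hb0 hmd0⟩

private theorem no_shift' (G : LamGraph Node Name) {E : Node → Node → Prop}
    (hHom : G.toPreLamGraph.Homogeneous E) (hProp : G.toPreLamGraph.ClosedProp E)
    {x y : Node} {ρ : List Dir}
    (hxy : E x y) (hp : G.toPreLamGraph.Path ρ x y) (hne : ρ ≠ []) : False := by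
  haveI := G.finite
  have step : ∀ a b : Node, G.toPreLamGraph.Path ρ a b → E a b →
      ∃ d, G.toPreLamGraph.Path ρ b d ∧ E b d := fun a b hpab hab =>
    transfer' hHom hProp hpab hab
  let T := {p : Node × Node // G.toPreLamGraph.Path ρ p.1 p.2 ∧ E p.1 p.2}
  let f : ℕ → T := fun k => Nat.rec (⟨(x, y), hp, hxy⟩ : T)
    (fun _ prev => ⟨(prev.1.2, Classical.choose (step _ _ prev.2.1 prev.2.2)),
      (Classical.choose_spec (step _ _ prev.2.1 prev.2.2)).1,
      (Classical.choose_spec (step _ _ prev.2.1 prev.2.2)).2⟩) k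
  let z : ℕ → Node := fun k => (f k).1.1
  have hzstep : ∀ k, G.toPreLamGraph.Path ρ (z k) (z (k + 1)) := by
    intro k
    have h1 : z (k + 1) = (f k).1.2 := rfl
    rw [h1]
    exact (f k).2.1
  have chain : ∀ i d, ∃ τ : List Dir,
      G.toPreLamGraph.Path τ (z i) (z (i + d)) ∧ τ.length = d * ρ.length := by
    intro i d
    induction d with
    | zero => exact ⟨[], Path.nil _, by simp⟩
    | succ d ih =>
      obtain ⟨τ, hτ, hlen⟩ := ih
      refine ⟨ρ ++ τ, path_comp' hτ (hzstep (i + d)), ?_⟩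
      simp [hlen, Nat.succ_mul]
      ring
  obtain ⟨i, j, hne', heq⟩ := Finite.exists_ne_map_eq_of_infinite z
  have key : ∀ i j : ℕ, i < j → z i = z j → False := by
    intro i j hij hz
    obtain ⟨τ, hτ, hlen⟩ := chain i (j - i)
    rw [Nat.add_sub_cancel' hij.le, ← hz] at hτ
    have hτnil := G.acyclic _ _ hτ
    rw [hτnil] at hlen
    have h1 : j - i ≠ 0 := Nat.sub_ne_zero_of_lt hij
    have h2 : ρ.length ≠ 0 := by simpa using hne
    exact (Nat.mul_ne_zero h1 h2) (by simpa using hlen.symm)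
  rcases lt_or_gt_of_ne hne' with hlt | hlt
  · exact key _ _ hlt heq
  · exact key _ _ hlt heq.symm

private theorem prop_subE' {G : PreLamGraph Node Name} {E Q : Node → Node → Prop}
    (hProp : G.ClosedProp E) (hQE : ∀ n m, Q n m → E n m) :
    ∀ {n m}, Propagation G Q n m → E n m := by
  intro n m h
  induction h with
  | base h => exact hQE _ _ h
  | appL _ hn hm ih => exact hProp.1 _ _ _ _ _ _ hn hm ih
  | appR _ hn hm ih => exact hProp.2.1 _ _ _ _ _ _ hn hm ih
  | abs _ hn hm ih => exact hProp.2.2 _ _ _ _ hn hm ih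

private theorem spread_subE' {G : PreLamGraph Node Name} {E Q : Node → Node → Prop}
    (hProp : G.ClosedProp E) (hQE : ∀ n m, Q n m → E n m) (hEq : Equivalence E) :
    ∀ {n m}, Spreading G Q n m → E n m := by
  intro n m h
  induction h with
  | base h => exact hQE _ _ h
  | refl n => exact hEq.refl n
  | symm _ ih => exact hEq.symm ih
  | trans _ _ ih1 ih2 => exact hEq.trans ih1 ih2
  | appL _ hn hm ih => exact hProp.1 _ _ _ _ _ _ hn hm ih
  | appR _ hn hm ih => exact hProp.2.1 _ _ _ _ _ _ hn hm ih
  | abs _ hn hm ih => exact hProp.2.2 _ _ _ _ hn hm ih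

private theorem rst_subE' {E : Node → Node → Prop} {R : Node → Node → Prop}
    (hEq : Equivalence E) (hRE : ∀ n m, R n m → E n m) :
    ∀ {n m}, RstClosure R n m → E n m := by
  intro n m h
  induction h with
  | base h => exact hRE _ _ h
  | refl a => exact hEq.refl a
  | symm _ ih => exact hEq.symm ih
  | trans _ _ ih1 ih2 => exact hEq.trans ih1 ih2

private theorem prop_paths' {G : PreLamGraph Node Name} {Q : Node → Node → Prop} {n m : Node}
    (h : Propagation G Q n m) :
    ∃ r r' τ, Q r r' ∧ G.Path τ r n ∧ G.Path τ r' m := by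
  induction h with
  | base h => exact ⟨_, _, [], h, Path.nil _, Path.nil _⟩
  | appL _ hn hm ih =>
    obtain ⟨r, r', τ, hq, p1, p2⟩ := ih
    exact ⟨r, r', .left :: τ, hq, Path.appL p1 hn, Path.appL p2 hm⟩
  | appR _ hn hm ih =>
    obtain ⟨r, r', τ, hq, p1, p2⟩ := ih
    exact ⟨r, r', .right :: τ, hq, Path.appR p1 hn, Path.appR p2 hm⟩
  | abs _ hn hm ih =>
    obtain ⟨r, r', τ, hq, p1, p2⟩ := ih
    exact ⟨r, r', .body :: τ, hq, Path.abs p1 hn, Path.abs p2 hm⟩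

private theorem prop_scope' (G : LamGraph Node Name) {Q E : Node → Node → Prop}
    (hQ : G.toPreLamGraph.IsQuery Q) (hSE : G.toPreLamGraph.SharingEquivalence E)
    (hQE : ∀ n m, Q n m → E n m) {n m l l' : Node}
    (h : Propagation G.toPreLamGraph Q n m)
    (hn : G.toPreLamGraph.label n = .bvar l) (hm : G.toPreLamGraph.label m = .bvar l') :
    Spreading G.toPreLamGraph Q l l' := by
  obtain ⟨hOpen, ⟨⟨hHom, hProp⟩, hScope⟩, hEq⟩ := hSE
  obtain ⟨r, r', τ, hq, p1, p2⟩ := prop_paths' h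
  obtain ⟨hr, hr'⟩ := hQ _ _ hq
  have c1 : G.toPreLamGraph.Crosses τ r l := G.dominated _ _ hn r τ hr p1
  have c2 : G.toPreLamGraph.Crosses τ r' l' := G.dominated _ _ hm r' τ hr' p2
  obtain ⟨σ, hσ, pl⟩ := crosses_suffix' c1
  obtain ⟨σ', hσ', pl'⟩ := crosses_suffix' c2
  obtain ⟨q', pq'⟩ := path_prefix' p2 hσ
  have hlq' : Spreading G.toPreLamGraph Q l q' := parallel' (Spreading.base hq) pl pq'
  have hEnm : E n m := prop_subE' hProp hQE h
  have hEll' : E l l' := hScope _ _ _ _ hn hm hEnm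
  have hElq' : E l q' := spread_subE' hProp hQE hEq hlq'
  have hq'l' : E q' l' := hEq.trans (hEq.symm hElq') hEll'
  obtain ⟨t, ht⟩ := hσ
  obtain ⟨t', ht'⟩ := hσ'
  rcases suffix_total' t t' σ σ' (ht.trans ht'.symm) with hs | hs
  · obtain ⟨ρ, hρ⟩ := hs
    rw [← hρ] at pl'
    have pρ : G.toPreLamGraph.Path ρ q' l' := path_split' ρ pl' pq'
    cases ρ with
    | nil => cases pρ; exact hlq'
    | cons d ρ' => exact (no_shift' G hHom hProp hq'l' pρ (by simp)).elim
  · obtain ⟨ρ, hρ⟩ := hs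
    rw [← hρ] at pq'
    have pρ : G.toPreLamGraph.Path ρ l' q' := path_split' ρ pq' pl'
    cases ρ with
    | nil => cases pρ; exact hlq'
    | cons d ρ' => exact (no_shift' G hHom hProp (hEq.symm hq'l') pρ (by simp)).elim

section Rst

variable {G : PreLamGraph Node Name} {Q E : Node → Node → Prop}
  (hHom : G.Homogeneous E) (hProp : G.ClosedProp E)
  (hQE : ∀ n m, Q n m → E n m) (hEq : Equivalence E)

include hProp hQE hEq in
private theorem rstE' {n m : Node} (h : RstClosure (Propagation G Q) n m) : E n m :=
  rst_subE' hEq (fun _ _ hh => prop_subE' hProp hQE hh) h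

include hHom hProp hQE hEq in
private theorem rst_appL' : ∀ {n m : Node}, RstClosure (Propagation G Q) n m →
    ∀ {n1 n2 m1 m2 : Node}, G.label n = .app n1 n2 → G.label m = .app m1 m2 →
    RstClosure (Propagation G Q) n1 m1 := by
  intro n m h
  induction h with
  | base h => intro n1 n2 m1 m2 hn hm; exact .base (.appL h hn hm)
  | refl a =>
    intro n1 n2 m1 m2 hn hm
    rw [hn] at hm
    injection hm with h1 h2
    rw [h1]
    exact .refl _
  | symm _ ih => intro n1 n2 m1 m2 hn hm; exact .symm (ih hm hn)
  | trans h1 h2 ih1 ih2 =>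
    intro n1 n2 m1 m2 hn hm
    have hEab : E _ _ := rstE' hProp hQE hEq h1
    have hk := hHom _ _ hEab
    rw [hn] at hk
    obtain ⟨b1, b2, hb⟩ := kind_app' hk.symm
    exact .trans (ih1 hn hb) (ih2 hb hm)

include hHom hProp hQE hEq in
private theorem rst_appR' : ∀ {n m : Node}, RstClosure (Propagation G Q) n m →
    ∀ {n1 n2 m1 m2 : Node}, G.label n = .app n1 n2 → G.label m = .app m1 m2 →
    RstClosure (Propagation G Q) n2 m2 := by
  intro n m h
  induction h with
  | base h => intro n1 n2 m1 m2 hn hm; exact .base (.appR h hn hm)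
  | refl a =>
    intro n1 n2 m1 m2 hn hm
    rw [hn] at hm
    injection hm with h1 h2
    rw [h2]
    exact .refl _
  | symm _ ih => intro n1 n2 m1 m2 hn hm; exact .symm (ih hm hn)
  | trans h1 h2 ih1 ih2 =>
    intro n1 n2 m1 m2 hn hm
    have hEab : E _ _ := rstE' hProp hQE hEq h1
    have hk := hHom _ _ hEab
    rw [hn] at hk
    obtain ⟨b1, b2, hb⟩ := kind_app' hk.symm
    exact .trans (ih1 hn hb) (ih2 hb hm)

include hHom hProp hQE hEq in
private theorem rst_abs' : ∀ {n m : Node}, RstClosure (Propagation G Q) n m →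
    ∀ {n' m' : Node}, G.label n = .abs n' → G.label m = .abs m' →
    RstClosure (Propagation G Q) n' m' := by
  intro n m h
  induction h with
  | base h => intro n' m' hn hm; exact .base (.abs h hn hm)
  | refl a =>
    intro n' m' hn hm
    rw [hn] at hm
    injection hm with h1
    rw [h1]
    exact .refl _
  | symm _ ih => intro n' m' hn hm; exact .symm (ih hm hn)
  | trans h1 h2 ih1 ih2 =>
    intro n' m' hn hm
    have hEab : E _ _ := rstE' hProp hQE hEq h1
    have hk := hHom _ _ hEab
    rw [hn] at hk
    obtain ⟨b1, hb⟩ := kind_abs' hk.symm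
    exact .trans (ih1 hn hb) (ih2 hb hm)

include hHom hProp hQE hEq in
private theorem spread_to_rst' : ∀ {n m : Node}, Spreading G Q n m →
    RstClosure (Propagation G Q) n m := by
  intro n m h
  induction h with
  | base h => exact .base (.base h)
  | refl n => exact .refl n
  | symm _ ih => exact .symm ih
  | trans _ _ ih1 ih2 => exact .trans ih1 ih2
  | appL _ hn hm ih => exact rst_appL' hHom hProp hQE hEq ih hn hm
  | appR _ hn hm ih => exact rst_appR' hHom hProp hQE hEq ih hn hm
  | abs _ hn hm ih => exact rst_abs' hHom hProp hQE hEq ih hn hm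

end Rst

private theorem rst_scope' (G : LamGraph Node Name) {Q E : Node → Node → Prop}
    (hQ : G.toPreLamGraph.IsQuery Q) (hSE : G.toPreLamGraph.SharingEquivalence E)
    (hQE : ∀ n m, Q n m → E n m) :
    ∀ {n m : Node}, RstClosure (Propagation G.toPreLamGraph Q) n m →
    ∀ {l l' : Node}, G.toPreLamGraph.label n = .bvar l →
    G.toPreLamGraph.label m = .bvar l' → Spreading G.toPreLamGraph Q l l' := by
  intro n m h
  induction h with
  | base h => intro l l' hn hm; exact prop_scope' G hQ hSE hQE h hn hm
  | refl a =>
    intro l l' hn hm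
    rw [hn] at hm
    injection hm with h1
    rw [h1]
    exact .refl _
  | symm _ ih => intro l l' hn hm; exact .symm (ih hm hn)
  | trans h1 h2 ih1 ih2 =>
    intro l l' hn hm
    have hEab : E _ _ := rstE' hSE.2.1.1.2 hQE hSE.2.2 h1
    have hk := hSE.2.1.1.1 _ _ hEab
    rw [hn] at hk
    obtain ⟨b1, hb⟩ := kind_bvar' hk.symm
    exact .trans (ih1 hn hb) (ih2 hb hm)

private theorem spread_scope' (G : LamGraph Node Name) {Q E : Node → Node → Prop}
    (hQ : G.toPreLamGraph.IsQuery Q) (hSE : G.toPreLamGraph.SharingEquivalence E)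
    (hQE : ∀ n m, Q n m → E n m) {n m l l' : Node}
    (h : Spreading G.toPreLamGraph Q n m)
    (hn : G.toPreLamGraph.label n = .bvar l) (hm : G.toPreLamGraph.label m = .bvar l') :
    Spreading G.toPreLamGraph Q l l' :=
  rst_scope' G hQ hSE hQE
    (spread_to_rst' hSE.2.1.1.1 hSE.2.1.1.2 hQE hSE.2.2 h) hn hm

end SharingAux
open PreLamGraph in
/-- Universality of `Q⇓`: if some sharing equivalence contains `Q`,
then `Q⇓` is the smallest sharing equivalence containing `Q`. -/
theorem universality {Node Name : Type} (G : LamGraph Node Name)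
    (Q : Node → Node → Prop) (hQ : G.toPreLamGraph.IsQuery Q)
    (h : ∃ E : Node → Node → Prop, G.toPreLamGraph.SharingEquivalence E ∧
      ∀ n m, Q n m → E n m) :
    G.toPreLamGraph.SharingEquivalence (Spreading G.toPreLamGraph Q) ∧
    (∀ n m, Q n m → Spreading G.toPreLamGraph Q n m) ∧
    (∀ E : Node → Node → Prop, G.toPreLamGraph.SharingEquivalence E →
      (∀ n m, Q n m → E n m) →
      ∀ n m, Spreading G.toPreLamGraph Q n m → E n m) := by

  obtain ⟨E, hSE, hQE⟩ := h
  have hOpen := hSE.1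
  have hHom := hSE.2.1.1.1
  have hProp := hSE.2.1.1.2
  have hEq := hSE.2.2
  have hsub : ∀ n m, Spreading G.toPreLamGraph Q n m → E n m :=
    fun n m hh => spread_subE' hProp hQE hEq hh
  refine ⟨⟨?_, ⟨⟨?_, ?_, ?_, ?_⟩, ?_⟩, ?_⟩, ?_, ?_⟩
  · intro n m a b hn hm hh
    exact hOpen n m a b hn hm (hsub _ _ hh)
  · intro n m hh
    exact hHom _ _ (hsub _ _ hh)
  · intro n m n1 n2 m1 m2 hn hm hh
    exact Spreading.appL hh hn hm
  · intro n m n1 n2 m1 m2 hn hm hh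
    exact Spreading.appR hh hn hm
  · intro n m n' m' hn hm hh
    exact Spreading.abs hh hn hm
  · intro n m l l' hn hm hh
    exact spread_scope' G hQ hSE hQE hh hn hm
  · exact ⟨fun n => .refl n, fun hh => .symm hh, fun h1 h2 => .trans h1 h2⟩
  · exact fun n m hh => .base hh
  · intro E' hSE' hQE' n m hh
    exact spread_subE' hSE'.2.1.1.2 hQE' hSE'.2.2 hh
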